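/- (Convergence of two-block coordinate ascent for the mean-variance objective.) Let n : ℕ, let Θ ⊆ ℝⁿ be open, let A B : ℝⁿ → ℝ be continuously differentiable, let λ > 0, and define F(θ, y) := A(θ) + λ (2 B(θ) y − y²) and J(θ) := A(θ) + λ (B(θ))². Let θ₀ ∈ Θ and assume the set { (θ, y) ∈ Θ × ℝ | F(θ, y) ≥ J(θ₀) } is compact. Suppose sequences (θ_k) in Θ and (y_k) in ℝ satisfy, for every k ≥ 0: y_{k+1} = B(θ_k) (so y_{k+1} maximizes y ↦ F(θ_k, y)), and θ_{k+1} ∈ Θ attains the supremum of θ ↦ F(θ, y_{k+1}) over Θ. Then: (i) J(θ_{k+1}) ≥ J(θ_k) for all k; (ii) the sequence (J(θ_k)) converges; and (iii) liminf_{k→∞} ‖∇J(θ_k)‖ = 0, where ∇J(θ) denotes the gradient of J at θ. -/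

import Mathlib

open Filter Topology InnerProductSpace

/-! The identity `F(θ, y) = J(θ) − λ (B θ − y)²` (`lifted_eq_objective_sub`) drives the argument.
Along the iteration it gives
`J(θ_k) = F(θ_k, B θ_k) ≤ F(θ_{k+1}, B θ_k) = J(θ_{k+1}) − λ (B θ_{k+1} − B θ_k)²`, so `J(θ_k)`
increases; the points `(θ_k, B θ_k)` then stay in the compact superlevel set, so `J(θ_k)`
is bounded, hence converges, and the increments `B θ_{k+1} − B θ_k` tend to zero. As `θ_{k+1}` is
an interior maximiser of `F(·, B θ_k)`, `∇J(θ_{k+1}) = 2λ (B θ_{k+1} − B θ_k) ∇B(θ_{k+1})`, and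
`∇B` is bounded on the compact projection of that set, so `∇J(θ_k) → 0`. -/

theorem Real.tendsto_zero_of_sq_tendsto_zero {ι : Type*} {l : Filter ι} {d : ι → ℝ}
    (h : Tendsto (fun k => d k ^ 2) l (𝓝 0)) : Tendsto d l (𝓝 0) := by
  rw [tendsto_zero_iff_abs_tendsto_zero]
  simpa [Function.comp_def, Real.sqrt_sq_eq_abs] using h.sqrt

theorem monotone_of_add_mul_sq_le_succ {u d : ℕ → ℝ} {c : ℝ} (hc : 0 ≤ c)
    (h : ∀ k, u k + c * d k ^ 2 ≤ u (k + 1)) : Monotone u :=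
  monotone_nat_of_le_succ fun k => by nlinarith [h k, sq_nonneg (d k)]

theorem tendsto_zero_of_add_mul_sq_le_succ {u d : ℕ → ℝ} {c : ℝ} (hc : 0 < c)
    (hu : BddAbove (Set.range u)) (h : ∀ k, u k + c * d k ^ 2 ≤ u (k + 1)) :
    Tendsto d atTop (𝓝 0) := by
  have hu_lim := tendsto_atTop_ciSup (monotone_of_add_mul_sq_le_succ hc.le h) hu
  have hgap : Tendsto (fun k => (u (k + 1) - u k) / c) atTop (𝓝 0) := by
    simpa using ((hu_lim.comp (tendsto_add_atTop_nat 1)).sub hu_lim).div_const c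
  refine Real.tendsto_zero_of_sq_tendsto_zero <|
    squeeze_zero (fun k => sq_nonneg _) (fun k => ?_) hgap
  rw [le_div_iff₀ hc]
  linarith [h k]

theorem IsCompact.bddAbove_range_comp {X ι : Type*} [TopologicalSpace X] {K : Set X}
    (hK : IsCompact K) {f : X → ℝ} (hf : ContinuousOn f K) {g : ι → X} (hg : ∀ i, g i ∈ K) :
    BddAbove (Set.range (f ∘ g)) :=
  (hK.bddAbove_image hf).mono (Set.range_subset_iff.2 fun i => Set.mem_image_of_mem f (hg i))

theorem norm_gradient_eq_norm_fderiv {E : Type*} [NormedAddCommGroup E] [InnerProductSpace ℝ E]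
    [CompleteSpace E] (f : E → ℝ) (x : E) : ‖gradient f x‖ = ‖fderiv ℝ f x‖ := by
  rw [← toDual_gradient, LinearIsometryEquiv.norm_map]

namespace MeanVariance

variable {E : Type*} (A B : E → ℝ) (lam : ℝ)

def objective (θ : E) : ℝ := A θ + lam * B θ ^ 2

def lifted (θ : E) (y : ℝ) : ℝ := A θ + lam * (2 * B θ * y - y ^ 2)

variable {A B lam}

theorem lifted_eq_objective_sub (θ : E) (y : ℝ) :
    lifted A B lam θ y = objective A B lam θ - lam * (B θ - y) ^ 2 := by
  unfold lifted objective; ring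

theorem lifted_self (θ : E) : lifted A B lam θ (B θ) = objective A B lam θ := by
  simp [lifted_eq_objective_sub]

theorem objective_add_mul_sq_le_of_lifted_le {θ θ' : E}
    (h : lifted A B lam θ (B θ) ≤ lifted A B lam θ' (B θ)) :
    objective A B lam θ + lam * (B θ' - B θ) ^ 2 ≤ objective A B lam θ' := by
  rw [lifted_self, lifted_eq_objective_sub] at h
  linarith

theorem fderiv_objective_of_isLocalMax_lifted [NormedAddCommGroup E] [NormedSpace ℝ E]
    {θ : E} {y : ℝ} (hA : DifferentiableAt ℝ A θ) (hB : DifferentiableAt ℝ B θ)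
    (hmax : IsLocalMax (lifted A B lam · y) θ) :
    fderiv ℝ (objective A B lam) θ = (2 * lam * (B θ - y)) • fderiv ℝ B θ := by
  have hF : DifferentiableAt ℝ (lifted A B lam · y) θ := by unfold lifted; fun_prop
  have hsq : HasFDerivAt (fun θ => lam * (B θ - y) ^ 2)
      (lam • (2 • (B θ - y) ^ (2 - 1)) • fderiv ℝ B θ) θ :=
    ((hB.hasFDerivAt.sub_const y).pow 2).const_mul lam
  have hsplit : objective A B lam = fun θ => lifted A B lam θ y + lam * (B θ - y) ^ 2 := by
    funext θ; rw [lifted_eq_objective_sub]; ring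
  rw [hsplit, fderiv_fun_add hF hsq.differentiableAt, hmax.fderiv_eq_zero, hsq.fderiv, zero_add,
    smul_smul]
  congr 1
  simp only [nsmul_eq_mul]; ring

theorem norm_gradient_objective_of_isLocalMax_lifted [NormedAddCommGroup E]
    [InnerProductSpace ℝ E] [CompleteSpace E] {θ : E} {y : ℝ} (hA : DifferentiableAt ℝ A θ)
    (hB : DifferentiableAt ℝ B θ) (hmax : IsLocalMax (lifted A B lam · y) θ) :
    ‖gradient (objective A B lam) θ‖ = |2 * lam * (B θ - y)| * ‖fderiv ℝ B θ‖ := by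
  rw [norm_gradient_eq_norm_fderiv, fderiv_objective_of_isLocalMax_lifted hA hB hmax, norm_smul,
    Real.norm_eq_abs]

theorem tendsto_norm_gradient_objective [NormedAddCommGroup E] [InnerProductSpace ℝ E]
    [CompleteSpace E] {Θ : Set E} (hΘ : IsOpen Θ) (hA : Differentiable ℝ A)
    (hB : Differentiable ℝ B) {θseq : ℕ → E} (hθ : ∀ k, θseq (k + 1) ∈ Θ)
    (hmax : ∀ k, ∀ θ ∈ Θ,
      lifted A B lam θ (B (θseq k)) ≤ lifted A B lam (θseq (k + 1)) (B (θseq k)))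
    (hdB : Tendsto (fun k => B (θseq (k + 1)) - B (θseq k)) atTop (𝓝 0))
    (hB' : BddAbove (Set.range fun k => ‖fderiv ℝ B (θseq k)‖)) :
    Tendsto (fun k => ‖gradient (objective A B lam) (θseq k)‖) atTop (𝓝 0) := by
  obtain ⟨M, hM⟩ := hB'
  have hB'_bdd : IsBoundedUnder (· ≤ ·) atTop (norm ∘ fun k => ‖fderiv ℝ B (θseq (k + 1))‖) :=
    isBoundedUnder_of ⟨M, fun k => by simpa using hM ⟨k + 1, rfl⟩⟩
  have hcoef : Tendsto (fun k => |2 * lam * (B (θseq (k + 1)) - B (θseq k))|) atTop (𝓝 0) := by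
    simpa using (hdB.const_mul (2 * lam)).abs
  refine (tendsto_add_atTop_iff_nat 1).mp <|
    (hcoef.zero_mul_isBoundedUnder_le hB'_bdd).congr fun k => ?_
  have hloc : IsLocalMax (lifted A B lam · (B (θseq k))) (θseq (k + 1)) :=
    eventually_of_mem (hΘ.mem_nhds (hθ k)) (hmax k)
  exact (norm_gradient_objective_of_isLocalMax_lifted (hA _) (hB _) hloc).symm

end MeanVariance

open MeanVariance in
/-- Convergence of two-block coordinate ascent for the mean-variance objective
`J(θ) = A(θ) + λ (B(θ))²` with lifted objective `F(θ, y) = A(θ) + λ (2 B(θ) y − y²)`: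
under compactness of the lifted superlevel set, the alternating updates
`y_{k+1} = B(θ_k)` and `θ_{k+1} ∈ argmax_{θ ∈ Θ} F(θ, y_{k+1})` produce a
monotonically improving sequence, `J(θ_k)` converges, and
`liminf_k ‖∇J(θ_k)‖ = 0`. -/
theorem mvpi_convergence (n : ℕ) (Θ : Set (EuclideanSpace ℝ (Fin n))) (hΘ : IsOpen Θ)
    (A B : EuclideanSpace ℝ (Fin n) → ℝ)
    (hA : ContDiff ℝ 1 A) (hB : ContDiff ℝ 1 B)
    (lam : ℝ) (hlam : 0 < lam)
    (θseq : ℕ → EuclideanSpace ℝ (Fin n)) (yseq : ℕ → ℝ)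
    (hθ0 : θseq 0 ∈ Θ)
    (hcpt : IsCompact {p : EuclideanSpace ℝ (Fin n) × ℝ |
      p.1 ∈ Θ ∧ A (θseq 0) + lam * (B (θseq 0)) ^ 2 ≤
        A p.1 + lam * (2 * B p.1 * p.2 - p.2 ^ 2)})
    (hy : ∀ k : ℕ, yseq (k + 1) = B (θseq k))
    (hθmem : ∀ k : ℕ, θseq (k + 1) ∈ Θ)
    (hmax : ∀ k : ℕ, ∀ θ ∈ Θ,
      A θ + lam * (2 * B θ * yseq (k + 1) - (yseq (k + 1)) ^ 2) ≤
      A (θseq (k + 1)) + lam * (2 * B (θseq (k + 1)) * yseq (k + 1) - (yseq (k + 1)) ^ 2)) :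
    (∀ k : ℕ, A (θseq (k + 1)) + lam * (B (θseq (k + 1))) ^ 2 ≥
      A (θseq k) + lam * (B (θseq k)) ^ 2) ∧
    (∃ Jlim : ℝ, Tendsto (fun k => A (θseq k) + lam * (B (θseq k)) ^ 2) atTop (nhds Jlim)) ∧
    liminf (fun k => ‖gradient (fun θ => A θ + lam * (B θ) ^ 2) (θseq k)‖) atTop = 0 := by
  set J := objective A B lam
  set K := {p : EuclideanSpace ℝ (Fin n) × ℝ | p.1 ∈ Θ ∧ J (θseq 0) ≤ lifted A B lam p.1 p.2}
  have hmem : ∀ k, θseq k ∈ Θ := fun | 0 => hθ0 | k + 1 => hθmem k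
  have hlift : ∀ k, ∀ θ ∈ Θ,
      lifted A B lam θ (B (θseq k)) ≤ lifted A B lam (θseq (k + 1)) (B (θseq k)) :=
    fun k => hy k ▸ hmax k
  have hstep : ∀ k, J (θseq k) + lam * (B (θseq (k + 1)) - B (θseq k)) ^ 2 ≤ J (θseq (k + 1)) :=
    fun k => objective_add_mul_sq_le_of_lifted_le (hlift k _ (hmem k))
  have hmono := monotone_of_add_mul_sq_le_succ hlam.le hstep
  have hK : ∀ k, (θseq k, B (θseq k)) ∈ K := fun k =>
    ⟨hmem k, by rw [lifted_self]; exact hmono k.zero_le⟩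
  have hJ : Continuous J := by
    have := hA.continuous; have := hB.continuous; unfold J objective; fun_prop
  have hJ_bdd : BddAbove (Set.range (J ∘ θseq)) :=
    hcpt.bddAbove_range_comp (hJ.comp continuous_fst).continuousOn (g := fun k => (θseq k, _)) hK
  have hB' : Continuous fun θ => ‖fderiv ℝ B θ‖ := (hB.continuous_fderiv one_ne_zero).norm
  have hB'_bdd : BddAbove (Set.range fun k => ‖fderiv ℝ B (θseq k)‖) :=
    hcpt.bddAbove_range_comp (hB'.comp continuous_fst).continuousOn (g := fun k => (θseq k, _)) hK
  have hgrad := tendsto_norm_gradient_objective hΘ (hA.differentiable one_ne_zero)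
    (hB.differentiable one_ne_zero) hθmem hlift
    (tendsto_zero_of_add_mul_sq_le_succ hlam hJ_bdd hstep) hB'_bdd
  exact ⟨fun k => hmono k.le_succ, ⟨_, tendsto_atTop_ciSup hmono hJ_bdd⟩, hgrad.liminf_eq⟩
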